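/- With the notation of the complete matching W on D_λ for λ with an independent, non-strongly-independent block π₁: the matching W is acyclic, i.e., there is no sequence a₀,…,a_k of lower-matched elements with a₀ = a_k, a_i ≠ a_{i+1}, and W(a_i) covering a_{i+1} for all i. Consequently γ strictly decreases along any such alternating path: if W(a_i) covers a_{i+1} with a_i ≠ a_{i+1}, then γ(a_i) > γ(a_{i+1}). -/

import Mathlib

/-- A composition of `n`: an ordered list of positive integers summing to `n`. -/
def IsComposition (n : ℕ) (l : List ℕ) : Prop :=
  (∀ x ∈ l, 0 < x) ∧ l.sum = n

/-- Refinement order on compositions: `Refines x y` means `x ≤ y` in the paper's order,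
i.e. the blocks of `x` are sums of consecutive runs of blocks of `y`.  The witness `P`
is the list of (nonempty) consecutive runs. -/
def Refines (x y : List ℕ) : Prop :=
  ∃ P : List (List ℕ), (∀ p ∈ P, p ≠ []) ∧ P.flatten = y ∧ P.map List.sum = x

/-- `Dset lam` is the poset `D_λ`: all compositions lying below some composition of type `lam`. -/
def Dset (lam : Multiset ℕ) : Set (List ℕ) :=
  {x | ∃ y : List ℕ, (y : Multiset ℕ) = lam ∧ Refines x y}

/-- The set of cut positions `{i₁,…,i_{l(x)-1}}` of a refinement witness `P`. -/
def cutSet (P : List (List ℕ)) : Finset ℕ :=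
  ((List.range (P.length - 1)).map (fun k => ((P.take (k + 1)).map List.length).sum)).toFinset

/-- The block at position `i` of the composition `l` is independent: any resonance with
`l[i]` on the left side forces a trivial resonance with a block on the right side. -/
def IsIndepAt (l : List ℕ) (i : ℕ) : Prop :=
  ∀ I J : Finset ℕ, I.Nonempty → J.Nonempty → Disjoint I J →
    (∀ a ∈ I ∪ J, a < l.length) → i ∈ I →
    (I.sum fun a => l.getD a 0) = (J.sum fun a => l.getD a 0) →
    ∃ q ∈ J, l.getD q 0 = l.getD i 0

/-- `ι(x)`: the smallest index of a block of `x` equal to `v` (`⊤` if none). -/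
noncomputable def iotaFn (v : ℕ) (x : List ℕ) : ℕ∞ :=
  sInf {j : ℕ∞ | ∃ k : ℕ, j = (k : ℕ∞) ∧ x.getD k 0 = v}

/-- Block `k` of `x ∈ D_λ` contains a copy of `v`: for every composition of type `lam`
refining `x`, the run summing to block `k` contains an entry equal to `v`. -/
def HasCopy (lam : Multiset ℕ) (v : ℕ) (x : List ℕ) (k : ℕ) : Prop :=
  ∀ P : List (List ℕ), (∀ p ∈ P, p ≠ []) → ((P.flatten : Multiset ℕ) = lam) →
    P.map List.sum = x → v ∈ P.getD k []

/-- `γ(x)`: the smallest index of a block of `x` strictly larger than `v` containing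
at least one copy of `v` (`⊤` if none). -/
noncomputable def gammaFn (lam : Multiset ℕ) (v : ℕ) (x : List ℕ) : ℕ∞ :=
  sInf {j : ℕ∞ | ∃ k : ℕ, j = (k : ℕ∞) ∧ v < x.getD k 0 ∧ HasCopy lam v x k}

/-- Split block `j` of `x` into `v` followed by the remainder. -/
def splitBlock (v : ℕ) (x : List ℕ) (j : ℕ) : List ℕ :=
  x.take j ++ [v, x.getD j 0 - v] ++ x.drop (j + 1)

/-- A number partition of `n`: a multiset of positive integers summing to `n`. -/
def IsPartition (n : ℕ) (lam : Multiset ℕ) : Prop :=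
  (∀ a ∈ lam, 0 < a) ∧ lam.sum = n

/-- Refinement order on number partitions: `PartCoarsen mu lam` means `lam ≥ mu`,
i.e. the blocks of `lam` can be grouped into disjoint nonempty sets summing to the
blocks of `mu`. -/
def PartCoarsen (mu lam : Multiset ℕ) : Prop :=
  ∃ P : Multiset (Multiset ℕ), (∀ p ∈ P, p ≠ 0) ∧ P.sum = lam ∧ P.map Multiset.sum = mu

/-- The cutting condition for the pair `(lam, pb)` where `pb` is a block of `lam`. -/
def CuttingCondition (lam : Multiset ℕ) (pb : ℕ) : Prop :=
  pb ∈ lam ∧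
  ∀ (mu : Multiset ℕ) (eta : ℕ) (I : Multiset ℕ),
    PartCoarsen mu lam → eta ∈ mu → I ≠ 0 → I ≤ lam.erase pb → eta = pb + I.sum →
      PartCoarsen (pb ::ₘ (I.sum ::ₘ mu.erase eta)) lam

/-- The vector in `ℚ^l` associated to the resonance `(I, J)`. -/
def resVec (l : ℕ) (I J : Finset (Fin l)) : Fin l → ℚ :=
  fun i => if i ∈ I then 1 else if i ∈ J then -1 else 0

-- ========== auxiliary lemmas ==========

lemma aux_getD_drop (l : List ℕ) (n m d : ℕ) : (l.drop n).getD m d = l.getD (n + m) d := by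
  simp [List.getD_eq_getElem?_getD, List.getElem?_drop]

lemma aux_getD_append_left (l₁ l₂ : List ℕ) (n d : ℕ) (h : n < l₁.length) :
    (l₁ ++ l₂).getD n d = l₁.getD n d := by
  simp [List.getD_eq_getElem?_getD, List.getElem?_append, h]

lemma aux_getD_append_right (l₁ l₂ : List ℕ) (n d : ℕ) (h : l₁.length ≤ n) :
    (l₁ ++ l₂).getD n d = l₂.getD (n - l₁.length) d := by
  simp [List.getD_eq_getElem?_getD, List.getElem?_append, Nat.not_lt.2 h]

lemma aux_getD_take (l : List ℕ) (n m d : ℕ) (h : m < n) :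
    (l.take n).getD m d = l.getD m d := by
  simp [List.getD_eq_getElem?_getD, List.getElem?_take, h]

lemma aux_getD_tail (l : List ℕ) (hl : l ≠ []) (n d : ℕ) :
    l.tail.getD n d = l.getD (n + 1) d := by
  cases l with
  | nil => exact absurd rfl hl
  | cons c l => simp [List.getD_cons_succ]

lemma enat_sInf_mem {S : Set ℕ∞} (h : sInf S ≠ ⊤) : sInf S ∈ S := by
  have hne : {n : ℕ | (n : ℕ∞) ∈ S}.Nonempty := by
    by_contra hemp
    rw [Set.not_nonempty_iff_eq_empty] at hemp
    apply h
    apply le_antisymm le_top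
    apply le_sInf
    intro x hx
    induction x using ENat.recTopCoe with
    | top => exact le_rfl
    | coe n =>
      exact absurd hx (by intro hc; exact (Set.eq_empty_iff_forall_notMem.1 hemp n) hc)
  have h1 : (↑(sInf {n : ℕ | (n : ℕ∞) ∈ S}) : ℕ∞) ∈ S := Nat.sInf_mem hne
  have h2 : sInf S = (↑(sInf {n : ℕ | (n : ℕ∞) ∈ S}) : ℕ∞) := by
    apply le_antisymm (sInf_le h1)
    apply le_sInf
    intro x hx
    induction x using ENat.recTopCoe with
    | top => exact le_top
    | coe m => exact_mod_cast Nat.sInf_le hx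
  rw [h2]; exact h1

lemma list_len_le_sum (L : List ℕ) (h : ∀ a ∈ L, 1 ≤ a) : L.length ≤ L.sum :=
  List.length_le_sum_of_one_le L h

lemma list_sum_eq_len (L : List ℕ) (h : ∀ a ∈ L, 1 ≤ a) (hs : L.sum = L.length) :
    ∀ a ∈ L, a = 1 := by
  induction L with
  | nil => simp
  | cons c L ih =>
    have hc : 1 ≤ c := h c (by simp)
    have hL : L.length ≤ L.sum := list_len_le_sum L (fun a ha => h a (by simp [ha]))
    simp only [List.sum_cons, List.length_cons] at hs
    have hc1 : c = 1 := by omega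
    have hsum : L.sum = L.length := by omega
    intro a ha
    rcases List.mem_cons.1 ha with rfl | ha
    · exact hc1
    · exact ih (fun a ha => h a (by simp [ha])) hsum a ha

lemma flatten_singletons : ∀ (P : List (List ℕ)), (∀ p ∈ P, p.length = 1) →
    P.flatten = P.map List.sum := by
  intro P
  induction P with
  | nil => simp
  | cons p P ih =>
    intro h
    have hp : p.length = 1 := h p (by simp)
    obtain ⟨c, rfl⟩ : ∃ c, p = [c] := by
      match p, hp with
      | [c], _ => exact ⟨c, rfl⟩
    simp [ih (fun q hq => h q (by simp [hq]))]

lemma refines_succ_struct : ∀ (P : List (List ℕ)) (x y : List ℕ),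
    (∀ p ∈ P, p ≠ []) → P.flatten = y → P.map List.sum = x → x.length + 1 = y.length →
    ∃ j, j + 1 < y.length ∧
      (∀ i, i < j → x.getD i 0 = y.getD i 0) ∧
      x.getD j 0 = y.getD j 0 + y.getD (j+1) 0 ∧
      (∀ i, j < i → x.getD i 0 = y.getD (i+1) 0) := by
  intro P
  induction P with
  | nil =>
    intro x y _ hf hm hl
    subst hf; subst hm; simp at hl
  | cons p P ih =>
    intro x y hne hf hm hl
    subst hf; subst hm
    have hp : p ≠ [] := hne p (by simp)
    have hp1 : 1 ≤ p.length := List.length_pos_iff.2 hp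
    have hposlen : ∀ a ∈ P.map List.length, 1 ≤ a := by
      intro a ha
      simp only [List.mem_map] at ha
      obtain ⟨q, hq, rfl⟩ := ha
      exact List.length_pos_iff.2 (hne q (by simp [hq]))
    have hlenP : P.length ≤ (P.map List.length).sum :=
      le_trans (by simp) (list_len_le_sum _ hposlen)
    simp only [List.flatten_cons, List.map_cons, List.length_cons, List.length_append,
      List.length_map, List.length_flatten] at hl
    have hcase : p.length = 1 ∨ p.length = 2 := by omega
    rcases hcase with h1 | h2
    · obtain ⟨c, rfl⟩ : ∃ c, p = [c] := by
        match p, h1 with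
        | [c], _ => exact ⟨c, rfl⟩
      have hrec := ih (P.map List.sum) P.flatten (fun q hq => hne q (by simp [hq])) rfl rfl
        (by simp only [List.length_map, List.length_flatten]; omega)
      obtain ⟨j, hj1, hj2, hj3, hj4⟩ := hrec
      refine ⟨j + 1, ?_, ?_, ?_, ?_⟩
      · simp only [List.flatten_cons, List.singleton_append, List.length_cons]; omega
      · intro i hi
        cases i with
        | zero => simp
        | succ t => simpa using hj2 t (by omega)
      · simpa using hj3
      · intro i hi
        obtain ⟨t, rfl⟩ : ∃ t, i = t + 1 := ⟨i - 1, by omega⟩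
        simpa using hj4 t (by omega)
    · obtain ⟨c, d, rfl⟩ : ∃ c d, p = [c, d] := by
        match p, h2 with
        | [c, d], _ => exact ⟨c, d, rfl⟩
      have hall1 : ∀ q ∈ P, q.length = 1 := by
        have := list_sum_eq_len (P.map List.length) hposlen (by simp only [List.length_map]; omega)
        intro q hq
        exact this q.length (List.mem_map.2 ⟨q, hq, rfl⟩)
      have hfl : P.flatten = P.map List.sum := flatten_singletons P hall1
      refine ⟨0, ?_, ?_, ?_, ?_⟩
      · simp only [List.flatten_cons, List.cons_append, List.singleton_append,
          List.length_cons]; omega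
      · intro i hi; omega
      · simp
      · intro i hi
        obtain ⟨t, rfl⟩ : ∃ t, i = t + 1 := ⟨i - 1, by omega⟩
        simp [hfl]

/-- Realize a sub-multiset of `↑l` by a set of indices. -/
lemma realize_le (l : List ℕ) (S : Multiset ℕ) (hS : S ≤ (l : Multiset ℕ)) :
    ∃ K : Finset ℕ, (∀ a ∈ K, a < l.length) ∧
      Multiset.map (fun a => l.getD a 0) K.val = S := by
  rw [← S.coe_toList, Multiset.coe_le] at hS
  obtain ⟨l', hperm, hsub⟩ := hS
  obtain ⟨is, hmap, hpair⟩ := List.sublist_eq_map_getElem hsub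
  have hnodup : (is.map Fin.val).Nodup := by
    refine List.Pairwise.imp (fun h => Nat.ne_of_lt h) ?_
    exact List.Pairwise.map Fin.val (fun a b h => h) hpair
  refine ⟨⟨(is.map Fin.val : List ℕ), hnodup⟩, ?_, ?_⟩
  · intro a ha
    replace ha : a ∈ is.map Fin.val := ha
    simp only [List.mem_map] at ha
    obtain ⟨i, _, rfl⟩ := ha
    exact i.isLt
  · show Multiset.map (fun a => l.getD a 0) ↑(is.map Fin.val) = S
    rw [Multiset.map_coe, List.map_map]
    have : (fun a => l.getD a 0) ∘ Fin.val = fun i : Fin l.length => l[i] := by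
      funext i
      exact List.getD_eq_getElem l 0 i.isLt
    rw [this, ← hmap]
    rw [← S.coe_toList]
    exact Multiset.coe_eq_coe.2 hperm

lemma map_filter_comp (f : ℕ → ℕ) (p : ℕ → Prop) [DecidablePred p] (s : Multiset ℕ) :
    Multiset.map f (Multiset.filter (fun a => p (f a)) s) = Multiset.filter p (Multiset.map f s) := by
  rw [Multiset.filter_map]
  rfl

/-- The key consequence of independence: if `Q ≤ λ` sums to `A.sum + v` where `A`
together with an extra copy of `v` fits in `λ`, then `Q` contains a copy of `v`. -/
lemma indep_key (v : ℕ) (l : List ℕ) (hpos : ∀ a ∈ l, 0 < a) (hlen : 2 ≤ l.length)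
    (hhead : l.getD 0 0 = v) (hind : IsIndepAt l 0)
    (Q A : Multiset ℕ) (hQ : Q ≤ (l : Multiset ℕ)) (hA : v ::ₘ A ≤ (l : Multiset ℕ))
    (hsum : Q.sum = A.sum + v) : v ∈ Q := by
  by_contra hvQ
  have hlnil : l ≠ [] := by intro h; rw [h] at hlen; simp at hlen
  have hvpos : 0 < v := by
    rw [← hhead]
    rw [List.getD_eq_getElem l 0 (by omega)]
    exact hpos _ (List.getElem_mem _)
  set A₁ : Multiset ℕ := v ::ₘ A with hA₁
  set C : Multiset ℕ := A₁ ∩ Q with hC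
  have hCA : C ≤ A₁ := Multiset.inter_le_left
  have hCQ : C ≤ Q := Multiset.inter_le_right
  set A' : Multiset ℕ := A₁ - C with hA'
  set B' : Multiset ℕ := Q - C with hB'
  have hA'C : A' + C = A₁ := tsub_add_cancel_of_le hCA
  have hB'C : B' + C = Q := tsub_add_cancel_of_le hCQ
  have hsumA : A'.sum + C.sum = A₁.sum := by rw [← Multiset.sum_add, hA'C]
  have hsumB : B'.sum + C.sum = Q.sum := by rw [← Multiset.sum_add, hB'C]
  have hA₁sum : A₁.sum = A.sum + v := by rw [hA₁, Multiset.sum_cons]; omega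
  have hsum' : A'.sum = B'.sum := by omega
  have hcntvQ : Multiset.count v Q = 0 := Multiset.count_eq_zero.2 hvQ
  have hvA' : v ∈ A' := by
    rw [← Multiset.count_pos, hA', Multiset.count_sub, hC, Multiset.count_inter, hcntvQ]
    simp [hA₁]
  have hdisj : ∀ x : ℕ, Multiset.count x A' = 0 ∨ Multiset.count x B' = 0 := by
    intro x
    rw [hA', hB', Multiset.count_sub, Multiset.count_sub, hC, Multiset.count_inter]
    omega
  have hvB' : v ∉ B' := by
    intro h
    exact hvQ (Multiset.mem_of_le tsub_le_self h)
  have hB'ne : B' ≠ 0 := by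
    intro h
    have : A'.sum = 0 := by rw [hsum', h]; simp
    have hvle : v ≤ A'.sum := Multiset.single_le_sum (fun x _ => Nat.zero_le x) v hvA'
    omega
  set A₂ : Multiset ℕ := A'.erase v with hA₂
  have hA₂cons : v ::ₘ A₂ = A' := Multiset.cons_erase hvA'
  have hABle : A' + B' ≤ (l : Multiset ℕ) := by
    rw [Multiset.le_iff_count]
    intro x
    rw [Multiset.count_add]
    rcases hdisj x with h | h
    · rw [h, zero_add]
      exact le_trans (Multiset.count_le_of_le x tsub_le_self)
        (Multiset.count_le_of_le x hQ)
    · rw [h, add_zero]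
      exact le_trans (Multiset.count_le_of_le x tsub_le_self)
        (Multiset.count_le_of_le x hA)
  have hlcons : (l : Multiset ℕ) = v ::ₘ (l.tail : Multiset ℕ) := by
    conv_lhs => rw [← List.cons_head!_tail hlnil]
    rw [← Multiset.cons_coe]
    congr 1
    rw [← hhead, List.head!_eq_head? ]
    cases l with
    | nil => exact absurd rfl hlnil
    | cons c t => simp [List.getD_cons_zero]
  have hsubtail : A₂ + B' ≤ (l.tail : Multiset ℕ) := by
    have : v ::ₘ (A₂ + B') ≤ v ::ₘ (l.tail : Multiset ℕ) := by
      rw [← Multiset.cons_add, hA₂cons, ← hlcons]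
      exact hABle
    exact (Multiset.cons_le_cons_iff v).1 this
  obtain ⟨K, hKlt, hKval⟩ := realize_le l.tail (A₂ + B') hsubtail
  set f : ℕ → ℕ := fun a => l.getD a 0 with hf
  set K' : Finset ℕ := K.map ⟨fun a => a + 1, fun a b h => by simpa using h⟩ with hK'
  have hK'mem : ∀ a ∈ K', ∃ b ∈ K, a = b + 1 := by
    intro a ha
    simp only [hK', Finset.mem_map, Function.Embedding.coeFn_mk] at ha
    obtain ⟨b, hb, rfl⟩ := ha
    exact ⟨b, hb, rfl⟩
  have hK'val : Multiset.map f K'.val = A₂ + B' := by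
    rw [← hKval, hK', Finset.map_val, Multiset.map_map]
    apply Multiset.map_congr rfl
    intro b hb
    show f (b + 1) = l.tail.getD b 0
    rw [hf, aux_getD_tail l hlnil]
  classical
  set I : Finset ℕ := insert 0 (K'.filter (fun a => f a ∈ A')) with hI
  set J : Finset ℕ := K'.filter (fun a => f a ∈ B') with hJ
  have h0K' : (0 : ℕ) ∉ K' := by
    intro h
    obtain ⟨b, _, hb⟩ := hK'mem 0 h
    omega
  have hJval : Multiset.map f J.val = B' := by
    rw [hJ, Finset.filter_val, map_filter_comp f (· ∈ B'), hK'val, Multiset.filter_add]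
    have h1 : Multiset.filter (· ∈ B') A₂ = 0 := by
      rw [Multiset.filter_eq_nil]
      intro a ha hmem
      rcases hdisj a with h | h
      · have h2 : a ∈ A' := Multiset.mem_of_le (Multiset.erase_le v A') ha
        rw [← Multiset.count_pos] at h2; omega
      · rw [← Multiset.count_pos] at hmem; omega
    have h2 : Multiset.filter (· ∈ B') B' = B' := Multiset.filter_eq_self.2 (fun a ha => ha)
    rw [h1, h2, zero_add]
  have hIfval : Multiset.map f (K'.filter (fun a => f a ∈ A')).val = A₂ := by
    rw [Finset.filter_val, map_filter_comp f (· ∈ A'), hK'val, Multiset.filter_add]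
    have h1 : Multiset.filter (· ∈ A') A₂ = A₂ :=
      Multiset.filter_eq_self.2 (fun a ha => Multiset.mem_of_le (Multiset.erase_le v A') ha)
    have h2 : Multiset.filter (· ∈ A') B' = 0 := by
      rw [Multiset.filter_eq_nil]
      intro a ha hmem
      rcases hdisj a with h | h
      · rw [← Multiset.count_pos] at hmem; omega
      · rw [← Multiset.count_pos] at ha; omega
    rw [h1, h2, add_zero]
  have hf0 : f 0 = v := hhead
  have hIne : I.Nonempty := ⟨0, Finset.mem_insert_self _ _⟩
  have hJne : J.Nonempty := by
    rw [← Finset.card_pos]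
    by_contra h
    push_neg at h
    interval_cases hc : J.card
    · have : J.val = 0 := Finset.card_eq_zero.1 hc ▸ rfl
      rw [Finset.card_eq_zero] at hc
      apply hB'ne
      rw [← hJval, hc]; rfl
  have hdisjIJ : Disjoint I J := by
    rw [Finset.disjoint_left]
    intro a haI haJ
    rw [hJ, Finset.mem_filter] at haJ
    rcases Finset.mem_insert.1 haI with rfl | haI'
    · exact h0K' haJ.1
    · rw [Finset.mem_filter] at haI'
      rcases hdisj (f a) with h | h
      · rw [Multiset.count_eq_zero] at h; exact h haI'.2
      · rw [Multiset.count_eq_zero] at h; exact h haJ.2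
  have hbound : ∀ a ∈ I ∪ J, a < l.length := by
    intro a ha
    rcases Finset.mem_union.1 ha with ha | ha
    · rcases Finset.mem_insert.1 ha with rfl | ha'
      · omega
      · obtain ⟨b, hb, rfl⟩ := hK'mem a (Finset.mem_of_mem_filter a ha')
        have := hKlt b hb
        rw [List.length_tail] at this
        omega
    · obtain ⟨b, hb, rfl⟩ := hK'mem a (Finset.mem_of_mem_filter a ha)
      have := hKlt b hb
      rw [List.length_tail] at this
      omega
  have hsumI : (I.sum fun a => l.getD a 0) = A'.sum := by
    rw [hI, Finset.sum_insert (fun h => h0K' (Finset.mem_of_mem_filter 0 h))]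
    rw [Finset.sum_eq_multiset_sum]
    show f 0 + (Multiset.map f _).sum = A'.sum
    rw [hIfval, hf0, ← hA₂cons, Multiset.sum_cons]
  have hsumJ : (J.sum fun a => l.getD a 0) = B'.sum := by
    rw [Finset.sum_eq_multiset_sum]
    show (Multiset.map f J.val).sum = B'.sum
    rw [hJval]
  obtain ⟨q, hqJ, hq⟩ := hind I J hIne hJne hdisjIJ hbound (Finset.mem_insert_self _ _)
    (by rw [hsumI, hsumJ, hsum'])
  rw [hhead] at hq
  rw [hJ, Finset.mem_filter] at hqJ
  have hfq : f q ∈ B' := hqJ.2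
  rw [show f q = l.getD q 0 from rfl, hq] at hfq
  exact hvB' hfq

-- ===== splitBlock index facts =====

lemma splitBlock_length (v : ℕ) (a : List ℕ) (g : ℕ) (hg : g < a.length) :
    (splitBlock v a g).length = a.length + 1 := by
  rw [splitBlock]
  simp only [List.length_append, List.length_take, List.length_cons, List.length_drop,
    List.length_nil]
  omega

lemma splitBlock_getD_lt (v : ℕ) (a : List ℕ) (g i : ℕ) (hg : g ≤ a.length) (hi : i < g) :
    (splitBlock v a g).getD i 0 = a.getD i 0 := by
  rw [splitBlock, List.append_assoc,
    aux_getD_append_left _ _ _ _ (by rw [List.length_take]; omega),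
    aux_getD_take _ _ _ _ hi]

lemma splitBlock_getD_self (v : ℕ) (a : List ℕ) (g : ℕ) (hg : g ≤ a.length) :
    (splitBlock v a g).getD g 0 = v := by
  rw [splitBlock, List.append_assoc,
    aux_getD_append_right _ _ _ _ (by rw [List.length_take]; omega)]
  rw [List.length_take]
  have h1 : g - min g a.length = 0 := by omega
  rw [h1]
  rfl

lemma splitBlock_getD_succ (v : ℕ) (a : List ℕ) (g : ℕ) (hg : g ≤ a.length) :
    (splitBlock v a g).getD (g + 1) 0 = a.getD g 0 - v := by
  rw [splitBlock, List.append_assoc,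
    aux_getD_append_right _ _ _ _ (by rw [List.length_take]; omega)]
  rw [List.length_take]
  have h1 : g + 1 - min g a.length = 1 := by omega
  rw [h1]
  rfl

lemma splitBlock_getD_ge (v : ℕ) (a : List ℕ) (g i : ℕ) (hg : g ≤ a.length)
    (hi : g + 2 ≤ i) :
    (splitBlock v a g).getD i 0 = a.getD (i - 1) 0 := by
  rw [splitBlock, List.append_assoc,
    aux_getD_append_right _ _ _ _ (by rw [List.length_take]; omega)]
  rw [List.length_take]
  have h1 : i - min g a.length = (i - g - 2) + 1 + 1 := by omega
  rw [h1]
  simp only [List.cons_append, List.nil_append, List.getD_cons_succ]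
  rw [aux_getD_drop]
  congr 1
  omega

-- ===== facts about elements of Dset and refinements =====

lemma Dset_pos (l : List ℕ) (hpos : ∀ a ∈ l, 0 < a) (x : List ℕ)
    (hx : x ∈ Dset (l : Multiset ℕ)) : ∀ i, i < x.length → 0 < x.getD i 0 := by
  obtain ⟨y, hy, P, hne, hf, hm⟩ := hx
  intro i hi
  subst hm
  rw [List.length_map] at hi
  rw [List.getD_eq_getElem _ _ (by simpa using hi), List.getElem_map]
  apply List.sum_pos
  · intro c hc
    apply hpos
    have hcy : c ∈ y := by
      rw [← hf]
      exact List.mem_flatten.2 ⟨P[i], List.getElem_mem _, hc⟩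
    have : c ∈ (y : Multiset ℕ) := hcy
    rw [hy] at this
    exact this
  · exact hne _ (List.getElem_mem _)

lemma run_le (P : List (List ℕ)) (k : ℕ) (hk : k < P.length) :
    ((P.getD k [] : List ℕ) : Multiset ℕ) ≤ (P.flatten : Multiset ℕ) := by
  have hmem : P.getD k [] ∈ P := by
    rw [List.getD_eq_getElem _ _ hk]
    exact List.getElem_mem _
  exact Multiset.coe_le.2 (List.sublist_flatten_of_mem hmem).subperm

lemma run_sum (P : List (List ℕ)) (x : List ℕ) (hm : P.map List.sum = x) (k : ℕ)
    (hk : k < x.length) : (P.getD k []).sum = x.getD k 0 := by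
  subst hm
  rw [List.length_map] at hk
  rw [List.getD_eq_getElem _ _ hk, List.getD_eq_getElem _ _ (by simpa using hk),
    List.getElem_map]

lemma run_pair_sublist : ∀ (P : List (List ℕ)) (k : ℕ), k + 1 < P.length →
    (P.getD k [] ++ P.getD (k + 1) []).Sublist P.flatten := by
  intro P
  induction P with
  | nil => intro k hk; simp at hk
  | cons p P ih =>
    intro k hk
    cases k with
    | zero =>
      simp only [List.getD_cons_zero, List.getD_cons_succ, List.flatten_cons]
      apply List.Sublist.append_left
      have hP : 0 < P.length := by simpa using hk
      have hmem : P.getD 0 [] ∈ P := by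
        rw [List.getD_eq_getElem _ _ hP]
        exact List.getElem_mem _
      exact List.sublist_flatten_of_mem hmem
    | succ t =>
      simp only [List.getD_cons_succ, List.flatten_cons]
      exact List.sublist_append_of_sublist_right (ih t (by simpa using hk))

lemma run_pair_le (P : List (List ℕ)) (k : ℕ) (hk : k + 1 < P.length) :
    ((P.getD k [] : List ℕ) : Multiset ℕ) + ((P.getD (k + 1) [] : List ℕ) : Multiset ℕ)
      ≤ (P.flatten : Multiset ℕ) := by
  have h := (run_pair_sublist P k hk).subperm
  rw [← Multiset.coe_le] at h
  simpa using h

-- ===== gamma / iota facts =====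

lemma gamma_le (lam : Multiset ℕ) (v : ℕ) (x : List ℕ) (k : ℕ) (h1 : v < x.getD k 0)
    (h2 : HasCopy lam v x k) : gammaFn lam v x ≤ (k : ℕ∞) :=
  sInf_le ⟨k, rfl, h1, h2⟩

lemma iota_le (v : ℕ) (x : List ℕ) (k : ℕ) (h : x.getD k 0 = v) :
    iotaFn v x ≤ (k : ℕ∞) :=
  sInf_le ⟨k, rfl, h⟩

lemma gamma_spec (lam : Multiset ℕ) (v : ℕ) (x : List ℕ) (h : gammaFn lam v x ≠ ⊤) :
    ∃ g : ℕ, gammaFn lam v x = (g : ℕ∞) ∧ v < x.getD g 0 ∧ HasCopy lam v x g := by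
  have hmem : gammaFn lam v x ∈
      {j : ℕ∞ | ∃ k : ℕ, j = (k : ℕ∞) ∧ v < x.getD k 0 ∧ HasCopy lam v x k} :=
    enat_sInf_mem h
  obtain ⟨k, hk, h1, h2⟩ := hmem
  exact ⟨k, hk, h1, h2⟩

-- ===== the step lemma: γ strictly decreases =====

lemma step_main (v : ℕ) (l : List ℕ)
    (hpos : ∀ a ∈ l, 0 < a) (hlen : 2 ≤ l.length) (hhead : l.getD 0 0 = v)
    (hind : IsIndepAt l 0) (a b : List ℕ)
    (ha : a ∈ Dset (l : Multiset ℕ)) (hb : b ∈ Dset (l : Multiset ℕ))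
    (hga : gammaFn (l : Multiset ℕ) v a < iotaFn v a)
    (hgb : gammaFn (l : Multiset ℕ) v b < iotaFn v b)
    (hab : a ≠ b)
    (href : Refines b (splitBlock v a (gammaFn (l : Multiset ℕ) v a).toNat))
    (hlen2 : b.length + 1 = (splitBlock v a (gammaFn (l : Multiset ℕ) v a).toNat).length) :
    gammaFn (l : Multiset ℕ) v b < gammaFn (l : Multiset ℕ) v a := by
  have hgtop : gammaFn (l : Multiset ℕ) v a ≠ ⊤ := (hga.trans_le le_top).ne
  obtain ⟨g, hg, hvg, hcopy⟩ := gamma_spec _ _ _ hgtop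
  have htn : (gammaFn (l : Multiset ℕ) v a).toNat = g := by rw [hg]; simp
  rw [htn] at href hlen2
  have hglen : g < a.length := by
    by_contra h
    push_neg at h
    rw [List.getD_eq_default _ _ h] at hvg
    omega
  have hslen : (splitBlock v a g).length = a.length + 1 := splitBlock_length v a g hglen
  obtain ⟨P, hPne, hPf, hPm⟩ := href
  obtain ⟨j, hj1, hj2, hj3, hj4⟩ :=
    refines_succ_struct P b (splitBlock v a g) hPne hPf hPm hlen2
  have hblen : b.length = a.length := by omega
  have hapos := Dset_pos l hpos a ha
  rcases Nat.lt_trichotomy j g with hlt | heq | hgt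
  · rcases Nat.lt_or_ge (j + 1) g with hlt2 | hge2
    · -- j + 1 < g : block g-1 of b equals v
      have h1 : b.getD (g - 1) 0 = v := by
        rw [hj4 (g - 1) (by omega), show g - 1 + 1 = g by omega,
          splitBlock_getD_self v a g hglen.le]
      calc gammaFn (l : Multiset ℕ) v b < iotaFn v b := hgb
        _ ≤ ((g - 1 : ℕ) : ℕ∞) := iota_le _ _ _ h1
        _ < (g : ℕ∞) := by exact_mod_cast (by omega : g - 1 < g)
        _ = gammaFn (l : Multiset ℕ) v a := hg.symm
    · -- j + 1 = g : the key case
      have hjg : j + 1 = g := by omega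
      have hbj : b.getD j 0 = a.getD j 0 + v := by
        rw [hj3, splitBlock_getD_lt v a g j hglen.le (by omega), hjg,
          splitBlock_getD_self v a g hglen.le]
      have hcopyb : HasCopy (l : Multiset ℕ) v b j := by
        intro P2 hP2ne hP2f hP2m
        have hjb : j < b.length := by omega
        have hP2len : P2.length = b.length := by rw [← hP2m, List.length_map]
        have hQle : ((P2.getD j [] : List ℕ) : Multiset ℕ) ≤ (l : Multiset ℕ) := by
          rw [← hP2f]
          exact run_le P2 j (by omega)
        have hQsum : ((P2.getD j [] : List ℕ) : Multiset ℕ).sum = a.getD j 0 + v := by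
          rw [Multiset.sum_coe, run_sum P2 b hP2m j hjb, hbj]
        obtain ⟨y, hy, Pa, hane, haf, ham⟩ := ha
        have hafm : ((Pa.flatten : List ℕ) : Multiset ℕ) = (l : Multiset ℕ) := by
          rw [haf, hy]
        have hvrun : v ∈ Pa.getD g [] := hcopy Pa hane hafm ham
        have hPalen : Pa.length = a.length := by rw [← ham, List.length_map]
        have hAsum : ((Pa.getD j [] : List ℕ) : Multiset ℕ).sum = a.getD j 0 := by
          rw [Multiset.sum_coe]
          exact run_sum Pa a ham j (by omega)
        have hAle : v ::ₘ ((Pa.getD j [] : List ℕ) : Multiset ℕ) ≤ (l : Multiset ℕ) := by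
          have hpair : ((Pa.getD j [] : List ℕ) : Multiset ℕ)
              + ((Pa.getD (j + 1) [] : List ℕ) : Multiset ℕ)
              ≤ ((Pa.flatten : List ℕ) : Multiset ℕ) :=
            run_pair_le Pa j (by omega)
          rw [hafm] at hpair
          refine le_trans ?_ hpair
          rw [show v ::ₘ ((Pa.getD j [] : List ℕ) : Multiset ℕ)
              = ((Pa.getD j [] : List ℕ) : Multiset ℕ) + {v} by
            rw [add_comm, Multiset.singleton_add]]
          refine add_le_add le_rfl ?_
          rw [Multiset.singleton_le, hjg]
          exact hvrun
        have hkey := indep_key v l hpos hlen hhead hind _ _ hQle hAle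
          (by rw [hQsum, hAsum])
        exact hkey
      have hjpos : 0 < a.getD j 0 := hapos j (by omega)
      calc gammaFn (l : Multiset ℕ) v b ≤ (j : ℕ∞) :=
            gamma_le _ _ _ j (by omega) hcopyb
        _ < (g : ℕ∞) := by exact_mod_cast (by omega : j < g)
        _ = gammaFn (l : Multiset ℕ) v a := hg.symm
  · -- j = g : then b = a, contradiction
    exfalso
    apply hab
    have hvle : v ≤ a.getD g 0 := hvg.le
    apply List.ext_getElem (by omega)
    intro n h1 h2
    have hgd : a.getD n 0 = b.getD n 0 := by
      rcases Nat.lt_trichotomy n j with h | h | h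
      · rw [hj2 n h, splitBlock_getD_lt v a g n hglen.le (by omega)]
      · subst h
        rw [hj3, heq, splitBlock_getD_self v a g hglen.le,
          splitBlock_getD_succ v a g hglen.le]
        omega
      · rw [hj4 n h, splitBlock_getD_ge v a g (n + 1) hglen.le (by omega)]
        simp
    rw [← List.getD_eq_getElem a 0 h1, ← List.getD_eq_getElem b 0 h2, hgd]
  · -- g < j : block g of b equals v
    have h1 : b.getD g 0 = v := by
      rw [hj2 g hgt, splitBlock_getD_self v a g hglen.le]
    calc gammaFn (l : Multiset ℕ) v b < iotaFn v b := hgb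
      _ ≤ (g : ℕ∞) := iota_le _ _ _ h1
      _ = gammaFn (l : Multiset ℕ) v a := hg.symm

/-- the matching of Statement 6 is acyclic, and γ strictly decreases along
alternating paths. -/
theorem matching_on_Dlam_acyclic (v : ℕ) (l : List ℕ)
    (hpos : ∀ a ∈ l, 0 < a) (hlen : 2 ≤ l.length) (hhead : l.getD 0 0 = v)
    (hind : IsIndepAt l 0)
    (htriv : ∃ i : ℕ, 1 ≤ i ∧ i < l.length ∧ l.getD i 0 = v) :
    (∀ a b : List ℕ, a ∈ Dset (l : Multiset ℕ) → b ∈ Dset (l : Multiset ℕ) →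
      gammaFn (l : Multiset ℕ) v a < iotaFn v a →
      gammaFn (l : Multiset ℕ) v b < iotaFn v b → a ≠ b →
      Refines b (splitBlock v a (gammaFn (l : Multiset ℕ) v a).toNat) →
      b.length + 1 = (splitBlock v a (gammaFn (l : Multiset ℕ) v a).toNat).length →
      gammaFn (l : Multiset ℕ) v b < gammaFn (l : Multiset ℕ) v a) ∧
    ¬ ∃ (k : ℕ) (s : ℕ → List ℕ), 2 ≤ k ∧
      (∀ i ≤ k, s i ∈ Dset (l : Multiset ℕ) ∧
        gammaFn (l : Multiset ℕ) v (s i) < iotaFn v (s i)) ∧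
      s 0 = s k ∧ s 0 ≠ s 1 ∧
      (∀ i < k, s i ≠ s (i + 1) ∧
        Refines (s (i + 1))
          (splitBlock v (s i) (gammaFn (l : Multiset ℕ) v (s i)).toNat) ∧
        (s (i + 1)).length + 1 =
          (splitBlock v (s i) (gammaFn (l : Multiset ℕ) v (s i)).toNat).length) := by
  constructor
  · intro a b ha hb hga hgb hab href hlen2
    exact step_main v l hpos hlen hhead hind a b ha hb hga hgb hab href hlen2
  · rintro ⟨k, st, hk, hmem, h0k, h01, hstep⟩
    have key : ∀ i, i < k →
        gammaFn (l : Multiset ℕ) v (st (i + 1)) < gammaFn (l : Multiset ℕ) v (st i) := by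
      intro i hi
      exact step_main v l hpos hlen hhead hind (st i) (st (i + 1))
        (hmem i (by omega)).1 (hmem (i + 1) (by omega)).1
        (hmem i (by omega)).2 (hmem (i + 1) (by omega)).2
        (hstep i hi).1 (hstep i hi).2.1 (hstep i hi).2.2
    have mono : ∀ i, i ≤ k → 1 ≤ i →
        gammaFn (l : Multiset ℕ) v (st i) < gammaFn (l : Multiset ℕ) v (st 0) := by
      intro i
      induction i with
      | zero => intro _ h; omega
      | succ t ih =>
        intro hik _
        rcases Nat.eq_zero_or_pos t with rfl | ht
        · exact key 0 (by omega)
        · exact lt_trans (key t (by omega)) (ih (by omega) (by omega))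
    have hfin := mono k le_rfl (by omega)
    rw [← h0k] at hfin
    exact lt_irrefl _ hfin
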